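/- Let X be a convex subset of a real vector space. A preorder ≿ on X satisfies strong independence if and only if there exist a partially ordered real vector space V and a mixture-preserving function f : X → V that represents ≿ (i.e., x ≿ y ⟺ f(x) ≿_V f(y)). -/

import Mathlib

/-! The differences `x - y` of preferred pairs span a pointed cone `C`. Strong independence and
transitivity make every nonzero element of `C` a positive multiple of one such difference, and
strong independence then shows that `x - y ∈ C` already forces `x ≿ y`; so on `X`,
`x ≿ y ↔ x - y ∈ C`. Dividing out the lineality space `C ∩ -C` makes the image of `C` salient,
hence the positive cone of a linear partial order, and the quotient map is linear, so it is a
mixture-preserving representation. Conversely, a mixture-preserving representation pulls the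
translation and scaling invariance of the order on `V` back to strong independence. -/

universe u

def IsLinearPartialOrder {V : Type*} [AddCommGroup V] [Module ℝ V]
    (r : V → V → Prop) : Prop :=
  (∀ v, r v v) ∧ (∀ u v w, r u v → r v w → r u w) ∧ (∀ v w, r v w → r w v → v = w) ∧
    ∀ (v v' w : V) (l : ℝ), 0 < l → (r v v' ↔ r (l • v + w) (l • v' + w))

namespace PointedCone

variable {V : Type*} [AddCommGroup V] [Module ℝ V]

theorem isLinearPartialOrder_sub_mem {K : PointedCone ℝ V} (hK : ∀ v ∈ K, -v ∈ K → v = 0) :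
    IsLinearPartialOrder (fun v w => v - w ∈ K) := by
  refine ⟨fun v => by simp, fun u v w huv hvw => ?_, fun v w hvw hwv => ?_,
    fun v v' w l hl => ?_⟩
  · simpa using add_mem huv hvw
  · exact sub_eq_zero.mp (hK _ hvw (by rwa [neg_sub]))
  · dsimp only
    rw [add_sub_add_right_eq_sub, ← smul_sub, K.smul_mem_iff hl]

noncomputable def quotLineal (K : PointedCone ℝ V) : PointedCone ℝ (V ⧸ K.lineal) :=
  K.map K.lineal.mkQ

theorem mkQ_mem_quotLineal_iff {K : PointedCone ℝ V} {v : V} :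
    K.lineal.mkQ v ∈ K.quotLineal ↔ v ∈ K := by
  refine ⟨fun h => ?_, fun hv => mem_map.mpr ⟨v, hv, rfl⟩⟩
  obtain ⟨w, hw, hwv⟩ := mem_map.mp h
  have hvw : -(w - v) ∈ K := ((Submodule.Quotient.eq _).mp hwv).2
  simpa using add_mem hw hvw

theorem quotLineal_salient (K : PointedCone ℝ V) :
    ∀ p ∈ K.quotLineal, -p ∈ K.quotLineal → p = 0 := by
  rintro p hp hnp
  obtain ⟨v, rfl⟩ := K.lineal.mkQ_surjective p
  rw [← map_neg, mkQ_mem_quotLineal_iff] at hnp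
  rw [mkQ_mem_quotLineal_iff] at hp
  exact (Submodule.Quotient.mk_eq_zero _).mpr ⟨hp, hnp⟩

end PointedCone

variable {W : Type*} [AddCommGroup W] [Module ℝ W]

def StrongIndependence (X : Set W) (r : W → W → Prop) : Prop :=
  ∀ (a : ℝ), 0 < a → a < 1 → ∀ x ∈ X, ∀ y ∈ X, ∀ z ∈ X,
    (r x y ↔ r (a • x + (1 - a) • z) (a • y + (1 - a) • z))

def preferenceCone (X : Set W) (r : W → W → Prop) : PointedCone ℝ W :=
  PointedCone.hull ℝ {w | ∃ x ∈ X, ∃ y ∈ X, r x y ∧ x - y = w}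

namespace StrongIndependence

variable {X : Set W} {r : W → W → Prop}

theorem iff_right (h : StrongIndependence X r) {a : ℝ} (ha0 : 0 < a) (ha1 : a < 1)
    {x y z : W} (hx : x ∈ X) (hy : y ∈ X) (hz : z ∈ X) :
    r x y ↔ r (a • z + (1 - a) • x) (a • z + (1 - a) • y) := by
  have := h (1 - a) (by linarith) (by linarith) x hx y hy z hz
  rwa [sub_sub_cancel, add_comm, add_comm ((1 - a) • y)] at this

theorem mix (hconv : Convex ℝ X) (htrans : ∀ x ∈ X, ∀ y ∈ X, ∀ z ∈ X, r x y → r y z → r x z)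
    (h : StrongIndependence X r) {u v u' v' : W} (hu : u ∈ X) (hv : v ∈ X) (hu' : u' ∈ X)
    (hv' : v' ∈ X) (huv : r u v) (huv' : r u' v') {a : ℝ} (ha0 : 0 < a) (ha1 : a < 1) :
    r (a • u + (1 - a) • u') (a • v + (1 - a) • v') :=
  htrans _ (hconv hu hu' ha0.le (by linarith) (by ring)) _
    (hconv hv hu' ha0.le (by linarith) (by ring)) _
    (hconv hv hv' ha0.le (by linarith) (by ring))
    ((h a ha0 ha1 u hu v hv u' hu').mp huv) ((h.iff_right ha0 ha1 hu' hv' hv).mp huv')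

theorem eq_zero_or_eq_smul_sub_of_mem_preferenceCone (hconv : Convex ℝ X)
    (htrans : ∀ x ∈ X, ∀ y ∈ X, ∀ z ∈ X, r x y → r y z → r x z)
    (h : StrongIndependence X r) {w : W} (hw : w ∈ preferenceCone X r) :
    w = 0 ∨ ∃ t : ℝ, 0 < t ∧ ∃ u ∈ X, ∃ v ∈ X, r u v ∧ w = t • (u - v) := by
  induction hw using Submodule.span_induction with
  | mem w hw =>
    obtain ⟨u, hu, v, hv, huv, rfl⟩ := hw
    exact .inr ⟨1, one_pos, u, hu, v, hv, huv, (one_smul ℝ _).symm⟩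
  | zero => exact .inl rfl
  | add w w' _ _ ih ih' =>
    rcases ih with rfl | ⟨t, ht, u, hu, v, hv, huv, rfl⟩
    · simpa using ih'
    rcases ih' with rfl | ⟨s, hs, u', hu', v', hv', huv', rfl⟩
    · simpa using Or.inr ⟨t, ht, u, hu, v, hv, huv, rfl⟩
    -- `t • (u - v) + s • (u' - v')` is `t + s` times the difference of the mixtures with weight
    -- `t / (t + s)`.
    have hts : 0 < t + s := by linarith
    have ha0 : 0 < t / (t + s) := div_pos ht hts
    have ha1 : t / (t + s) < 1 := (div_lt_one hts).mpr (by linarith)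
    refine .inr ⟨t + s, hts, _, hconv hu hu' ha0.le (by linarith) (by ring), _,
      hconv hv hv' ha0.le (by linarith) (by ring),
      mix hconv htrans h hu hv hu' hv' huv huv' ha0 ha1, ?_⟩
    match_scalars <;> field_simp <;> ring
  | smul c w _ ih =>
    rcases ih with rfl | ⟨t, ht, u, hu, v, hv, huv, rfl⟩
    · exact .inl (smul_zero c)
    rcases c.2.eq_or_lt with hc | hc
    · exact .inl (by rw [← Nonneg.coe_smul, ← hc, zero_smul])
    · exact .inr ⟨c * t, mul_pos hc ht, u, hu, v, hv, huv, by rw [← Nonneg.coe_smul, smul_smul]⟩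

theorem of_sub_eq_smul_sub (h : StrongIndependence X r) {x y u v : W} {t : ℝ}
    (hx : x ∈ X) (hy : y ∈ X) (hu : u ∈ X) (hv : v ∈ X) (huv : r u v) (ht : 0 < t)
    (hxy : x - y = t • (u - v)) : r x y := by
  -- With `a = 1 / (1 + t)`, the mixtures `a x + (1 - a) v` and `a y + (1 - a) u` coincide.
  have h1t : 0 < 1 + t := by linarith
  have ha0 : 0 < 1 / (1 + t) := by positivity
  have ha1 : 1 / (1 + t) < 1 := by rw [div_lt_one h1t]; linarith
  have hmix : (1 / (1 + t)) • x + (1 - 1 / (1 + t)) • v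
      = (1 / (1 + t)) • y + (1 - 1 / (1 + t)) • u := by
    rw [sub_eq_iff_eq_add.mp hxy]
    match_scalars <;> field_simp <;> ring
  rw [h _ ha0 ha1 x hx y hy v hv, hmix]
  exact (h.iff_right ha0 ha1 hu hv hy).mp huv

theorem sub_mem_preferenceCone_iff (hconv : Convex ℝ X) (hrefl : ∀ x ∈ X, r x x)
    (htrans : ∀ x ∈ X, ∀ y ∈ X, ∀ z ∈ X, r x y → r y z → r x z)
    (h : StrongIndependence X r) {x y : W} (hx : x ∈ X) (hy : y ∈ X) :
    x - y ∈ preferenceCone X r ↔ r x y := by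
  refine ⟨fun hxy => ?_, fun hxy => Submodule.subset_span ⟨x, hx, y, hy, hxy, rfl⟩⟩
  rcases h.eq_zero_or_eq_smul_sub_of_mem_preferenceCone hconv htrans hxy with
    hxy | ⟨t, ht, u, hu, v, hv, huv, hxy⟩
  · rw [sub_eq_zero.mp hxy]
    exact hrefl y hy
  · exact h.of_sub_eq_smul_sub hx hy hu hv huv ht hxy

theorem of_isLinearPartialOrder_representation (hconv : Convex ℝ X) {V : Type*}
    [AddCommGroup V] [Module ℝ V] {rV : V → V → Prop} (hV : IsLinearPartialOrder rV)
    {f : W → V} (hmix : ∀ x ∈ X, ∀ y ∈ X, ∀ (a : ℝ), 0 ≤ a → a ≤ 1 →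
      f (a • x + (1 - a) • y) = a • f x + (1 - a) • f y)
    (hrep : ∀ x ∈ X, ∀ y ∈ X, (r x y ↔ rV (f x) (f y))) :
    StrongIndependence X r := by
  intro a ha0 ha1 x hx y hy z hz
  rw [hrep x hx y hy, hrep _ (hconv hx hz ha0.le (by linarith) (by ring))
    _ (hconv hy hz ha0.le (by linarith) (by ring)),
    hmix x hx z hz a ha0.le ha1.le, hmix y hy z hz a ha0.le ha1.le]
  exact hV.2.2.2 (f x) (f y) ((1 - a) • f z) a ha0

end StrongIndependence

theorem strong_independence_iff_mixture_preserving_representation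
    {W : Type u} [AddCommGroup W] [Module ℝ W] (X : Set W) (hconv : Convex ℝ X)
    (r : W → W → Prop)
    (hrefl : ∀ x ∈ X, r x x)
    (htrans : ∀ x ∈ X, ∀ y ∈ X, ∀ z ∈ X, r x y → r y z → r x z) :
    (∀ (a : ℝ), 0 < a → a < 1 → ∀ x ∈ X, ∀ y ∈ X, ∀ z ∈ X,
        (r x y ↔ r (a • x + (1 - a) • z) (a • y + (1 - a) • z)))
      ↔ ∃ (V : ModuleCat.{u} ℝ) (rV : V → V → Prop),
          IsLinearPartialOrder rV ∧ ∃ f : W → V,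
            (∀ x ∈ X, ∀ y ∈ X, ∀ (a : ℝ), 0 ≤ a → a ≤ 1 →
              f (a • x + (1 - a) • y) = a • f x + (1 - a) • f y) ∧
            ∀ x ∈ X, ∀ y ∈ X, (r x y ↔ rV (f x) (f y)) := by
  refine ⟨fun h => ?_, fun ⟨V, rV, hV, f, hmix, hrep⟩ =>
    StrongIndependence.of_isLinearPartialOrder_representation hconv hV hmix hrep⟩
  set C := preferenceCone X r
  refine ⟨ModuleCat.of ℝ (W ⧸ C.lineal), fun p q => p - q ∈ C.quotLineal,
    PointedCone.isLinearPartialOrder_sub_mem C.quotLineal_salient, C.lineal.mkQ,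
    fun x _ y _ a _ _ => by simp, fun x hx y hy => ?_⟩
  rw [← StrongIndependence.sub_mem_preferenceCone_iff hconv hrefl htrans h hx hy,
    ← PointedCone.mkQ_mem_quotLineal_iff, map_sub]
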